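/- Let D ≥ 1, let ρ₀ be a positive semidefinite matrix on ℂ^D with spectral decomposition ρ₀ = Σ_x λ_x|x⟩⟨x| (all λ_x > 0), let P = Σ_x |x⟩⟨x| be the projector onto its support, fix a nonzero scalar c, set L = Σ_x √λ_x (|x⟩⟨x|)ᵀ + c(I−P)ᵀ (an invertible matrix), and let |Ψ_m⟩ = N(I⊗L)|Ψ⟩ with N = √(D/Tr(L†L)). Then for every unit vector |χ⟩ ∈ ℂ^D with P|χ⟩ = |χ⟩, the matrix P · Tr_B(|Ψ_m⟩⟨Ψ_m| (I ⊗ (L^{-1})†(|χ⟩⟨χ|)ᵀ L^{-1})) · P has strictly positive trace and, after dividing by its trace, equals |χ⟩⟨χ|. (This is the statement, in Lemma 1 of the paper, that Alice's post-measurement state in the remote identical state preparation protocol is exactly the pure state measured by Bob.) -/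

import Mathlib

open Matrix MeasureTheory
open scoped Kronecker ComplexOrder

noncomputable section

/-- The positive semidefinite square root of a matrix (junk value `0` if not PSD). -/
def matSqrt {ι : Type*} [Fintype ι] [DecidableEq ι] (A : Matrix ι ι ℂ) : Matrix ι ι ℂ :=
  open Classical in if h : A.PosSemidef then
    (h.1.eigenvectorUnitary : Matrix ι ι ℂ) *
      diagonal ((↑) ∘ (fun r : ℝ => Real.sqrt r) ∘ h.1.eigenvalues) *
      (star h.1.eigenvectorUnitary : Matrix ι ι ℂ) else 0

/-- The matrix absolute value `|X| = √(XᴴX)`. -/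
def matAbs {ι : Type*} [Fintype ι] [DecidableEq ι] (X : Matrix ι ι ℂ) : Matrix ι ι ℂ :=
  matSqrt (Xᴴ * X)

/-- Uhlmann fidelity `F(ρ,σ) = (Tr|√ρ√σ|)²`. -/
def fid {ι : Type*} [Fintype ι] [DecidableEq ι] (ρ σ : Matrix ι ι ℂ) : ℝ :=
  ((matAbs (matSqrt ρ * matSqrt σ)).trace).re ^ 2

/-- A density matrix: positive semidefinite with unit trace. -/
def IsDensity {ι : Type*} [Fintype ι] [DecidableEq ι] (ρ : Matrix ι ι ℂ) : Prop :=
  ρ.PosSemidef ∧ ρ.trace = 1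

/-- The rank-one projector `|ψ⟩⟨ψ|`. -/
def ketbra {ι : Type*} (ψ : ι → ℂ) : Matrix ι ι ℂ := Matrix.vecMulVec ψ (star ψ)

/-- The `l`-fold tensor power of a matrix on `ℂ^d`, acting on `(ℂ^d)^{⊗l}`. -/
def tpow {d : ℕ} (M : Matrix (Fin d) (Fin d) ℂ) (l : ℕ) :
    Matrix (Fin l → Fin d) (Fin l → Fin d) ℂ :=
  Matrix.of fun f g => ∏ i, M (f i) (g i)

/-- Loewner order: `A ⪯ B` iff `B - A` is positive semidefinite. -/
def loewnerLE {ι : Type*} [Fintype ι] (A B : Matrix ι ι ℂ) : Prop := (B - A).PosSemidef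

/-- Projector onto the symmetric subspace of `(ℂ^d)^{⊗l}`:
`(1/l!) Σ_{π ∈ S_l} U_π` where `U_π` permutes the tensor factors. -/
def symProj (d l : ℕ) : Matrix (Fin l → Fin d) (Fin l → Fin d) ℂ :=
  (l.factorial : ℂ)⁻¹ •
    ∑ π : Equiv.Perm (Fin l), Matrix.of fun f g => if f = (fun i => g (π i)) then (1 : ℂ) else 0


/-- Partial trace over the second tensor factor. -/
def ptraceB {D : ℕ} (M : Matrix (Fin D × Fin D) (Fin D × Fin D) ℂ) :
    Matrix (Fin D) (Fin D) ℂ :=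
  Matrix.of fun i j => ∑ k, M (i, k) (j, k)

/-- The maximally entangled vector `(1/√D) Σᵢ |i⟩⊗|i⟩` on `ℂ^D ⊗ ℂ^D`. -/
def maxEnt (D : ℕ) : Fin D × Fin D → ℂ :=
  fun q => if q.1 = q.2 then ((Real.sqrt D : ℝ) : ℂ)⁻¹ else 0

/-!
Because the `x a` are orthonormal, `Lᵀ` acts as `√λ_a` on each `x a` and as `c` on the
orthogonal complement of their span, so `L` is invertible. Tracing out the second factor of
`|Ψ_m⟩⟨Ψ_m| (I ⊗ M)` gives `(N²/D) (L† M L)ᵀ`; for `M = (L⁻¹)† (|χ⟩⟨χ|)ᵀ L⁻¹` the factors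
of `L` cancel, leaving `Tr(L†L)⁻¹ |χ⟩⟨χ|`, which `P` fixes on both sides since `Pχ = χ`.
-/

theorem ketbra_mul_ketbra_of_orthonormal {n κ : Type*} [Fintype n] [DecidableEq κ]
    {x : κ → n → ℂ} (hx : ∀ a b, star (x a) ⬝ᵥ x b = if a = b then (1 : ℂ) else 0) (a b : κ) :
    ketbra (x a) * ketbra (x b) = if a = b then ketbra (x a) else 0 := by
  rw [ketbra, ketbra, vecMulVec_mul_vecMulVec, hx]
  split_ifs with hab
  · rw [one_smul, hab]
  · rw [zero_smul, vecMulVec_zero]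

section Orthonormal

variable {n κ : Type*} [Fintype κ]

/-- Functional calculus in the eigenbasis `x`, completed by the value `c` on the orthogonal
complement of its span. -/
def spectralMatrix [DecidableEq n] (x : κ → n → ℂ) (f : κ → ℂ) (c : ℂ) : Matrix n n ℂ :=
  ∑ a, f a • ketbra (x a) + c • (1 - ∑ a, ketbra (x a))

theorem sum_smul_ketbra_mul_sum_smul_ketbra [Fintype n] [DecidableEq κ] {x : κ → n → ℂ}
    (hx : ∀ a b, star (x a) ⬝ᵥ x b = if a = b then (1 : ℂ) else 0) (f g : κ → ℂ) :
    (∑ a, f a • ketbra (x a)) * (∑ b, g b • ketbra (x b)) = ∑ a, (f a * g a) • ketbra (x a) := by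
  simp only [Finset.sum_mul, Finset.mul_sum, smul_mul_smul_comm,
    ketbra_mul_ketbra_of_orthonormal hx, smul_ite, smul_zero, Finset.sum_ite_eq',
    Finset.mem_univ, if_true]

theorem spectralMatrix_mul [Fintype n] [DecidableEq n] [DecidableEq κ] {x : κ → n → ℂ}
    (hx : ∀ a b, star (x a) ⬝ᵥ x b = if a = b then (1 : ℂ) else 0) (f g : κ → ℂ) (c d : ℂ) :
    spectralMatrix x f c * spectralMatrix x g d = spectralMatrix x (f * g) (c * d) := by
  set S : (κ → ℂ) → Matrix n n ℂ := fun f => ∑ a, f a • ketbra (x a) with hS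
  have hSS : ∀ f g, S f * S g = S (f * g) := sum_smul_ketbra_mul_sum_smul_ketbra hx
  have hP : ∑ a, ketbra (x a) = S 1 := by simp only [hS, Pi.one_apply, one_smul]
  have hSQ : ∀ f, S f * (1 - S 1) = 0 := fun f => by rw [mul_sub, mul_one, hSS, mul_one, sub_self]
  have hQS : ∀ g, (1 - S 1) * S g = 0 := fun g => by rw [sub_mul, one_mul, hSS, one_mul, sub_self]
  have hQQ : (1 - S 1) * (1 - S 1) = 1 - S 1 := by rw [sub_mul, one_mul, hSQ, sub_zero]
  simp only [spectralMatrix, hP]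
  rw [add_mul, mul_add, mul_add, hSS, mul_smul_comm, hSQ, smul_mul_assoc, hQS,
    smul_mul_smul_comm, hQQ, smul_zero, smul_zero, add_zero, zero_add]

theorem spectralMatrix_one_one [DecidableEq n] (x : κ → n → ℂ) : spectralMatrix x 1 1 = 1 := by
  simp only [spectralMatrix, Pi.one_apply, one_smul, add_sub_cancel]

theorem isUnit_spectralMatrix [Fintype n] [DecidableEq n] [DecidableEq κ] {x : κ → n → ℂ}
    (hx : ∀ a b, star (x a) ⬝ᵥ x b = if a = b then (1 : ℂ) else 0) {f : κ → ℂ} {c : ℂ}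
    (hf : ∀ a, f a ≠ 0) (hc : c ≠ 0) : IsUnit (spectralMatrix x f c).det := by
  refine isUnit_det_of_right_inverse (B := spectralMatrix x f⁻¹ c⁻¹) ?_
  rw [spectralMatrix_mul hx, mul_inv_cancel₀ hc, ← spectralMatrix_one_one x]
  congr 1
  exact funext fun a => mul_inv_cancel₀ (hf a)

end Orthonormal

theorem conjTranspose_ketbra {n : Type*} (v : n → ℂ) : (ketbra v)ᴴ = ketbra v := by
  rw [ketbra, conjTranspose_vecMulVec, star_star]

section

variable {n : Type*} [Fintype n]

theorem trace_ketbra (v : n → ℂ) : (ketbra v).trace = star v ⬝ᵥ v := by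
  rw [ketbra, trace_vecMulVec, dotProduct_comm]

theorem mul_ketbra_mul_self_of_mulVec_eq {P : Matrix n n ℂ} {v : n → ℂ} (hP : P.IsHermitian)
    (hv : P *ᵥ v = v) : P * ketbra v * P = ketbra v := by
  rw [ketbra, mul_vecMulVec, vecMulVec_mul, hv, ← hP.eq, ← star_mulVec, hv]

theorem conjTranspose_mul_conj_inv_mul_self [DecidableEq n] {L : Matrix n n ℂ}
    (hL : IsUnit L.det) (X : Matrix n n ℂ) : Lᴴ * ((L⁻¹)ᴴ * X * L⁻¹) * L = X := by
  calc Lᴴ * ((L⁻¹)ᴴ * X * L⁻¹) * L = (L⁻¹ * L)ᴴ * X * (L⁻¹ * L) := by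
        simp only [conjTranspose_mul, mul_assoc]
    _ = X := by rw [nonsing_inv_mul L hL, conjTranspose_one, one_mul, mul_one]

theorem re_trace_conjTranspose_mul_self_pos {L : Matrix n n ℂ} (hL : L ≠ 0) :
    0 < (Lᴴ * L).trace.re := by
  have hpos : 0 < (Lᴴ * L).trace :=
    (posSemidef_conjTranspose_mul_self L).trace_nonneg.lt_of_ne
      (Ne.symm (trace_conjTranspose_mul_self_eq_zero_iff.not.mpr hL))
  exact (Complex.pos_iff.mp hpos).1

end

theorem one_kronecker_mulVec_maxEnt {D : ℕ} (L : Matrix (Fin D) (Fin D) ℂ) :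
    ((1 : Matrix (Fin D) (Fin D) ℂ) ⊗ₖ L) *ᵥ maxEnt D =
      fun q => ((Real.sqrt D : ℝ) : ℂ)⁻¹ * L q.2 q.1 := by
  ext q
  simp only [mulVec, dotProduct, Fintype.sum_prod_type, kroneckerMap_apply, one_apply, maxEnt,
    ite_mul, one_mul, zero_mul, mul_ite, mul_zero, Finset.sum_ite_eq, Finset.mem_univ, if_true]
  ring

theorem ptraceB_ketbra_mul_one_kronecker {D : ℕ} (V M : Matrix (Fin D) (Fin D) ℂ) :
    ptraceB (ketbra (fun q => V q.2 q.1) * ((1 : Matrix (Fin D) (Fin D) ℂ) ⊗ₖ M)) =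
      (Vᴴ * M * V)ᵀ := by
  ext i j
  simp only [ptraceB, of_apply, ketbra, mul_apply, Fintype.sum_prod_type, vecMulVec_apply,
    Pi.star_apply, kroneckerMap_apply, one_apply, conjTranspose_apply, transpose_apply,
    ite_mul, one_mul, zero_mul, mul_ite, mul_zero, Finset.sum_mul]
  refine Finset.sum_congr rfl fun k _ => ?_
  rw [Finset.sum_comm]
  simp only [Finset.sum_ite_eq', Finset.mem_univ, if_true]
  exact Finset.sum_congr rfl fun q _ => by ring

theorem remote_preparation_post_measurement_state_general
    (D : ℕ) (hD : 1 ≤ D)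
    -- spectral decomposition ρ₀ = Σ_x λ_x |x⟩⟨x| with all λ_x > 0
    (κ : Type*) [Fintype κ] [DecidableEq κ]
    (x : κ → (Fin D → ℂ)) (hx : ∀ a b, star (x a) ⬝ᵥ x b = (if a = b then (1 : ℂ) else 0))
    (lam : κ → ℝ) (hlam : ∀ a, 0 < lam a)
    -- P is the projector onto the support of ρ₀
    (P : Matrix (Fin D) (Fin D) ℂ) (hP : P = ∑ a, ketbra (x a))
    -- L = Σ_x √λ_x (|x⟩⟨x|)ᵀ + c(I−P)ᵀ with c ≠ 0
    (c : ℂ) (hc : c ≠ 0)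
    (L : Matrix (Fin D) (Fin D) ℂ)
    (hL : L = (∑ a, ((Real.sqrt (lam a) : ℝ) : ℂ) • (ketbra (x a))ᵀ) + c • (1 - P)ᵀ)
    -- |Ψ_m⟩ = N (I ⊗ L)|Ψ⟩ with N = √(D / Tr(L†L))
    (N : ℝ) (hN : N = Real.sqrt (D / ((Lᴴ * L).trace).re))
    (Ψm : Fin D × Fin D → ℂ)
    (hΨm : Ψm = (N : ℂ) • ((1 : Matrix (Fin D) (Fin D) ℂ) ⊗ₖ L).mulVec (maxEnt D))
    -- χ is a unit vector in the support of ρ₀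
    (χ : Fin D → ℂ) (hχ : star χ ⬝ᵥ χ = 1) (hPχ : P.mulVec χ = χ)
    -- Alice's (unnormalized) post-measurement matrix
    (A : Matrix (Fin D) (Fin D) ℂ)
    (hA : A = P * ptraceB (ketbra Ψm *
      ((1 : Matrix (Fin D) (Fin D) ℂ) ⊗ₖ ((L⁻¹)ᴴ * (ketbra χ)ᵀ * L⁻¹))) * P) :
    0 < A.trace.re ∧ (A.trace)⁻¹ • A = ketbra χ := by
  have hLdet : IsUnit L.det := by
    have hLB : L = (spectralMatrix x (fun a => (Real.sqrt (lam a) : ℂ)) c)ᵀ := by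
      simp only [hL, hP, spectralMatrix, transpose_add, transpose_smul, transpose_sum,
        transpose_sub, transpose_one]
    rw [hLB]
    refine isUnit_det_transpose _ (isUnit_spectralMatrix hx (fun a => ?_) hc)
    exact Complex.ofReal_ne_zero.mpr (Real.sqrt_pos.mpr (hlam a)).ne'
  set t := (Lᴴ * L).trace.re
  have ht : 0 < t := by
    have : Nonempty (Fin D) := ⟨⟨0, hD⟩⟩
    exact re_trace_conjTranspose_mul_self_pos ((isUnit_iff_isUnit_det L).mpr hLdet).ne_zero
  set α : ℝ := N * (Real.sqrt D)⁻¹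
  have hα : α ^ 2 = t⁻¹ := by
    have hD' : (0 : ℝ) < D := by exact_mod_cast hD
    rw [mul_pow, hN, Real.sq_sqrt (div_pos hD' ht).le, inv_pow, Real.sq_sqrt hD'.le]
    field_simp
  have hΨ : Ψm = fun q => ((α : ℂ) • L) q.2 q.1 := by
    rw [hΨm, one_kronecker_mulVec_maxEnt]
    ext q
    simp only [Pi.smul_apply, Matrix.smul_apply, smul_eq_mul, α]
    push_cast
    ring
  have hPh : P.IsHermitian := by
    simp only [hP, IsHermitian, conjTranspose_sum, conjTranspose_ketbra]
  have hA' : A = ((t⁻¹ : ℝ) : ℂ) • ketbra χ := by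
    rw [hA, hΨ, ptraceB_ketbra_mul_one_kronecker, conjTranspose_smul, smul_mul_assoc,
      mul_smul_comm, smul_mul_assoc, conjTranspose_mul_conj_inv_mul_self hLdet, smul_smul,
      transpose_smul, transpose_transpose, mul_smul_comm, smul_mul_assoc,
      mul_ketbra_mul_self_of_mulVec_eq hPh hPχ, ← hα]
    push_cast
    simp only [Complex.star_def, Complex.conj_ofReal, sq]
  have htr : A.trace = ((t⁻¹ : ℝ) : ℂ) := by
    rw [hA', trace_smul, trace_ketbra, hχ, smul_eq_mul, mul_one]
  refine ⟨by simpa [htr] using ht, ?_⟩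
  rw [htr, hA', smul_smul, inv_mul_cancel₀ (by exact_mod_cast (inv_pos.mpr ht).ne'), one_smul]

/-- in the remote identical state preparation protocol, Alice's
post-measurement state is exactly the pure state measured by Bob. -/
theorem remote_preparation_post_measurement_state
    (D : ℕ) (hD : 1 ≤ D)
    -- spectral decomposition ρ₀ = Σ_x λ_x |x⟩⟨x| with all λ_x > 0
    (κ : Type*) [Fintype κ] [DecidableEq κ]
    (x : κ → (Fin D → ℂ)) (hx : ∀ a b, star (x a) ⬝ᵥ x b = (if a = b then (1 : ℂ) else 0))
    (lam : κ → ℝ) (hlam : ∀ a, 0 < lam a)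
    (ρ₀ : Matrix (Fin D) (Fin D) ℂ) (hρ₀ : ρ₀ = ∑ a, (lam a : ℂ) • ketbra (x a))
    -- P is the projector onto the support of ρ₀
    (P : Matrix (Fin D) (Fin D) ℂ) (hP : P = ∑ a, ketbra (x a))
    -- L = Σ_x √λ_x (|x⟩⟨x|)ᵀ + c(I−P)ᵀ with c ≠ 0
    (c : ℂ) (hc : c ≠ 0)
    (L : Matrix (Fin D) (Fin D) ℂ)
    (hL : L = (∑ a, ((Real.sqrt (lam a) : ℝ) : ℂ) • (ketbra (x a))ᵀ) + c • (1 - P)ᵀ)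
    -- |Ψ_m⟩ = N (I ⊗ L)|Ψ⟩ with N = √(D / Tr(L†L))
    (N : ℝ) (hN : N = Real.sqrt (D / ((Lᴴ * L).trace).re))
    (Ψm : Fin D × Fin D → ℂ)
    (hΨm : Ψm = (N : ℂ) • ((1 : Matrix (Fin D) (Fin D) ℂ) ⊗ₖ L).mulVec (maxEnt D))
    -- χ is a unit vector in the support of ρ₀
    (χ : Fin D → ℂ) (hχ : star χ ⬝ᵥ χ = 1) (hPχ : P.mulVec χ = χ)
    -- Alice's (unnormalized) post-measurement matrix
    (A : Matrix (Fin D) (Fin D) ℂ)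
    (hA : A = P * ptraceB (ketbra Ψm *
      ((1 : Matrix (Fin D) (Fin D) ℂ) ⊗ₖ ((L⁻¹)ᴴ * (ketbra χ)ᵀ * L⁻¹))) * P) :
    0 < A.trace.re ∧ (A.trace)⁻¹ • A = ketbra χ :=
  remote_preparation_post_measurement_state_general D hD κ x hx lam hlam P hP c hc L hL N hN Ψm hΨm
    χ hχ hPχ A hA
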